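/- Let Φ be proper convex lsc and B β-cocoercive with S = {z : 0 ∈ ∂Φ(z) + Bz} ≠ ∅, and suppose 0 < μ < 4β. Then any classical solution x of ẋ(t) + x(t) − prox_{μΦ}(x(t) − μB(x(t))) = 0 satisfies: x(t) converges weakly to some x_∞ ∈ S, B(x(t)) → Bz strongly (Bz the common value of B on S), ẋ(t) → 0, and ∫₀^∞ ‖ẋ(t)‖² dt < ∞. -/

import Mathlib

/-!
For every zero `z` of `∂Φ + B`, monotonicity of `∂Φ` and cocoercivity of `B` give, as soon as
`μ < 4β`, the strong Fejér inequality `⟪ẋ, x - z⟫ ≤ -ε (‖ẋ‖² + ‖B x - B z‖²)` for some `ε > 0`.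
Hence `‖x(t) - z‖` decreases and `‖ẋ‖²`, `‖B x - B z‖²` are integrable on `(0, ∞)`; since `ẋ` and
`B x` are Lipschitz in time along the bounded orbit, Barbalat's lemma sends them to `0` and `B z`.
A weak cluster point `q` of the orbit then satisfies `B q = B z` by cocoercivity and is a zero of
`∂Φ + B` by the weak-strong closedness of the graph of `∂Φ`, and Opial's argument (distances to
zeros converge, so two weak cluster points coincide) gives weak convergence of the whole orbit.
-/

open scoped RealInnerProductSpace
open MeasureTheory Filter Set

/-- `v` belongs to the convex subdifferential of `Φ` at `x`. -/
def InSubdiff {H : Type*} [NormedAddCommGroup H] [InnerProductSpace ℝ H]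
    (Φ : H → EReal) (x v : H) : Prop :=
  ∀ y : H, Φ x + ((⟪v, y - x⟫ : ℝ) : EReal) ≤ Φ y

open Topology

section WeakConvergence

variable {H α : Type*} [NormedAddCommGroup H] [InnerProductSpace ℝ H]

def WeakTendsto (p : α → H) (L : Filter α) (q : H) : Prop :=
  ∀ w : H, Tendsto (fun t => ⟪p t, w⟫) L (𝓝 ⟪q, w⟫)

variable {L : Filter α} {p r : α → H} {q q' : H}

theorem Filter.Tendsto.weakTendsto (hp : Tendsto p L (𝓝 q)) : WeakTendsto p L q :=
  fun _ => hp.inner tendsto_const_nhds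

theorem WeakTendsto.add (hp : WeakTendsto p L q) (hr : WeakTendsto r L q') :
    WeakTendsto (fun t => p t + r t) L (q + q') := fun w => by
  simpa only [inner_add_left] using (hp w).add (hr w)

theorem WeakTendsto.tendsto_inner {v : α → H} {v₀ : H} {C : ℝ} (hp : WeakTendsto p L q)
    (hbdd : ∀ᶠ t in L, ‖p t‖ ≤ C) (hv : Tendsto v L (𝓝 v₀)) :
    Tendsto (fun t => ⟪v t, p t⟫) L (𝓝 ⟪v₀, q⟫) := by
  have hsmall : Tendsto (fun t => ⟪v t - v₀, p t⟫) L (𝓝 0) := by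
    refine squeeze_zero_norm' ?_ (by simpa using (tendsto_sub_nhds_zero_iff.2 hv).norm.mul_const C)
    filter_upwards [hbdd] with t ht
    exact (norm_inner_le_norm _ _).trans (mul_le_mul_of_nonneg_left ht (norm_nonneg _))
  have hlim : Tendsto (fun t => ⟪v₀, p t⟫) L (𝓝 ⟪v₀, q⟫) := by
    simpa only [real_inner_comm v₀] using hp v₀
  simpa [inner_sub_left] using hsmall.add hlim

theorem exists_weakTendsto_of_bounded [CompleteSpace H] (G : Ultrafilter α) {C : ℝ}
    (hbdd : ∀ᶠ t in (G : Filter α), ‖p t‖ ≤ C) : ∃ q, WeakTendsto p G q := by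
  have hinner_bdd : ∀ w, ∀ᶠ t in (G : Filter α), |⟪p t, w⟫| ≤ C * ‖w‖ := fun w => by
    filter_upwards [hbdd] with t ht
    exact (abs_real_inner_le_norm _ _).trans (mul_le_mul_of_nonneg_right ht (norm_nonneg _))
  have hlim : ∀ w : H, ∃ c : ℝ, Tendsto (fun t => ⟪p t, w⟫) G (𝓝 c) := fun w => by
    obtain ⟨c, -, hc⟩ := (isCompact_Icc (a := -(C * ‖w‖)) (b := C * ‖w‖)).ultrafilter_le_nhds
      (G.map fun t => ⟪p t, w⟫) (le_principal_iff.2 ((hinner_bdd w).mono fun t => abs_le.1))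
    exact ⟨c, hc⟩
  choose c hc using hlim
  -- the weak limit is the Riesz representative of the bounded linear functional `c`
  let ℓ : H →L[ℝ] ℝ := LinearMap.mkContinuous
    { toFun := c
      map_add' := fun w w' => tendsto_nhds_unique (hc (w + w')) <| by
        simpa only [inner_add_right] using (hc w).add (hc w')
      map_smul' := fun a w => tendsto_nhds_unique (hc (a • w)) <| by
        simpa only [inner_smul_right, RingHom.id_apply, smul_eq_mul] using (hc w).const_mul a }
    C fun w => le_of_tendsto (hc w).abs (hinner_bdd w)
  refine ⟨(InnerProductSpace.toDual ℝ H).symm ℓ, fun w => ?_⟩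
  rw [InnerProductSpace.toDual_symm_apply]
  exact hc w

theorem Convex.mem_of_weakTendsto [CompleteSpace H] [L.NeBot] {K : Set H} (hK : Convex ℝ K)
    (hKc : IsClosed K) (hp : WeakTendsto p L q) (hmem : ∀ᶠ t in L, p t ∈ K) : q ∈ K := by
  by_contra hq
  obtain ⟨f, u, hfq, hfK⟩ := geometric_hahn_banach_point_closed hK hKc hq
  set w := (InnerProductSpace.toDual ℝ H).symm f
  have hf : ∀ y, f y = ⟪y, w⟫ := fun y => by
    rw [real_inner_comm, InnerProductSpace.toDual_symm_apply]
  have hle : u ≤ f q := by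
    rw [hf]
    refine ge_of_tendsto (hp w) ?_
    filter_upwards [hmem] with t ht
    rw [← hf]
    exact (hfK _ ht).le
  linarith

theorem exists_weakTendsto_of_opial [CompleteSpace H] [L.NeBot] {S : Set H} {C : ℝ}
    (hbdd : ∀ᶠ t in L, ‖p t‖ ≤ C)
    (hdist : ∀ z ∈ S, ∃ c, Tendsto (fun t => ‖p t - z‖ ^ 2) L (𝓝 c))
    (hclust : ∀ (G : Ultrafilter α) (q : H), ↑G ≤ L → WeakTendsto p G q → q ∈ S) :
    ∃ q ∈ S, WeakTendsto p L q := by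
  have hcluster : ∀ G : Ultrafilter α, ↑G ≤ L → ∃ q ∈ S, WeakTendsto p G q := fun G hG => by
    obtain ⟨q, hq⟩ := exists_weakTendsto_of_bounded G (hbdd.filter_mono hG)
    exact ⟨q, hclust G q hG hq, hq⟩
  -- two weak cluster points in `S` have the same inner product with `q₁ - q₂`, by polarization
  have hunique : ∀ G₁ G₂ : Ultrafilter α, ↑G₁ ≤ L → ↑G₂ ≤ L → ∀ q₁ ∈ S, ∀ q₂ ∈ S,
      WeakTendsto p G₁ q₁ → WeakTendsto p G₂ q₂ → q₁ = q₂ := by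
    intro G₁ G₂ hG₁ hG₂ q₁ hq₁S q₂ hq₂S hq₁ hq₂
    obtain ⟨c₁, hc₁⟩ := hdist q₁ hq₁S
    obtain ⟨c₂, hc₂⟩ := hdist q₂ hq₂S
    have hpol : Tendsto (fun t => ⟪p t, q₁ - q₂⟫) L
        (𝓝 ((c₂ - c₁ - ‖q₂‖ ^ 2 + ‖q₁‖ ^ 2) / 2)) := by
      refine ((((hc₂.sub hc₁).sub_const _).add_const _).div_const 2).congr fun t => ?_
      rw [inner_sub_right, norm_sub_sq_real, norm_sub_sq_real]
      ring
    have e₁ := tendsto_nhds_unique (hq₁ (q₁ - q₂)) (hpol.mono_left hG₁)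
    have e₂ := tendsto_nhds_unique (hq₂ (q₁ - q₂)) (hpol.mono_left hG₂)
    rw [← sub_eq_zero, ← inner_self_eq_zero (𝕜 := ℝ), inner_sub_left]
    linarith
  obtain ⟨q, hqS, hq⟩ := hcluster (Ultrafilter.of L) (Ultrafilter.of_le L)
  refine ⟨q, hqS, fun w => tendsto_iff_ultrafilter _ _ _ |>.2 fun G hG => ?_⟩
  obtain ⟨q', hq'S, hq'⟩ := hcluster G hG
  rw [hunique _ _ (Ultrafilter.of_le L) hG q hqS q' hq'S hq hq']
  exact hq' w

end WeakConvergence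

section Subdifferential

variable {H α : Type*} [NormedAddCommGroup H] [InnerProductSpace ℝ H] {Φ : H → EReal}

theorem InSubdiff.ne_top {p v y : H} (h : InSubdiff Φ p v) (hy : Φ y ≠ ⊤) : Φ p ≠ ⊤ := by
  intro hp
  have := h y
  rw [hp, EReal.top_add_of_ne_bot (EReal.coe_ne_bot _), top_le_iff] at this
  exact hy this

theorem InSubdiff.inner_sub_nonneg (hproper : (∀ x, Φ x ≠ ⊥) ∧ ∃ x, Φ x ≠ ⊤) {p q v₁ v₂ : H}
    (h₁ : InSubdiff Φ p v₁) (h₂ : InSubdiff Φ q v₂) : 0 ≤ ⟪v₁ - v₂, p - q⟫ := by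
  obtain ⟨hbot, y, hy⟩ := hproper
  have hp := EReal.coe_toReal (h₁.ne_top hy) (hbot p)
  have hq := EReal.coe_toReal (h₂.ne_top hy) (hbot q)
  have e₁ : (Φ p).toReal + ⟪v₁, q - p⟫ ≤ (Φ q).toReal := by
    have := h₁ q
    rw [← hp, ← hq] at this
    exact_mod_cast this
  have e₂ : (Φ q).toReal + ⟪v₂, p - q⟫ ≤ (Φ p).toReal := by
    have := h₂ p
    rw [← hp, ← hq] at this
    exact_mod_cast this
  rw [← neg_sub p q, inner_neg_right] at e₁
  rw [inner_sub_left]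
  linarith

theorem LowerSemicontinuous.le_of_weakTendsto [CompleteSpace H] {L : Filter α} [L.NeBot]
    (hconvex : ∀ x y : H, ∀ a b : ℝ, 0 ≤ a → 0 ≤ b → a + b = 1 →
      Φ (a • x + b • y) ≤ (a : EReal) * Φ x + (b : EReal) * Φ y)
    (hlsc : LowerSemicontinuous Φ) {p : α → H} {q : H} (hp : WeakTendsto p L q) {e : EReal}
    (hle : ∀ᶠ t in L, Φ (p t) ≤ e) : Φ q ≤ e := by
  by_contra! hlt
  obtain ⟨r, her, hrq⟩ := EReal.exists_between_coe_real hlt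
  have hconv : Convex ℝ (Φ ⁻¹' Iic (r : EReal)) := fun u hu w hw a b ha hb hab => calc
    Φ (a • u + b • w) ≤ a * Φ u + b * Φ w := hconvex u w a b ha hb hab
    _ ≤ a * r + b * r := by gcongr <;> assumption
    _ = r := by rw [← EReal.coe_mul, ← EReal.coe_mul, ← EReal.coe_add, ← add_mul, hab, one_mul]
  have hq : Φ q ≤ r := hconv.mem_of_weakTendsto (hlsc.isClosed_preimage r) hp <|
    hle.mono fun t ht => ht.trans her.le
  exact (hq.trans_lt hrq).false

theorem InSubdiff.of_weakTendsto [CompleteSpace H] {L : Filter α} [L.NeBot]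
    (hconvex : ∀ x y : H, ∀ a b : ℝ, 0 ≤ a → 0 ≤ b → a + b = 1 →
      Φ (a • x + b • y) ≤ (a : EReal) * Φ x + (b : EReal) * Φ y)
    (hlsc : LowerSemicontinuous Φ) {p v : α → H} {q v₀ : H} {C : ℝ} (hp : WeakTendsto p L q)
    (hbdd : ∀ᶠ t in L, ‖p t‖ ≤ C) (hv : Tendsto v L (𝓝 v₀))
    (hsub : ∀ᶠ t in L, InSubdiff Φ (p t) (v t)) : InSubdiff Φ q v₀ := by
  intro y
  have hinner : Tendsto (fun t => ⟪v t, y - p t⟫) L (𝓝 ⟪v₀, y - q⟫) := by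
    simpa only [inner_sub_right] using (hv.inner tendsto_const_nhds).sub (hp.tendsto_inner hbdd hv)
  -- pass to the limit in `Φ (p t) + ⟪v t, y - p t⟫ ≤ Φ y`, after replacing the inner product by a
  -- real `m < ⟪v₀, y - q⟫`, so that the weak lower semicontinuity of `Φ` applies
  refine EReal.add_le_of_forall_lt fun a ha b hb => ?_
  obtain ⟨m, hbm, hm⟩ := EReal.exists_between_coe_real hb
  have hmq : Φ q + m ≤ Φ y := by
    rw [← EReal.le_sub_iff_add_le (.inl (EReal.coe_ne_bot m)) (.inl (EReal.coe_ne_top m))]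
    refine hlsc.le_of_weakTendsto hconvex hp ?_
    filter_upwards [hsub, hinner.eventually (eventually_gt_nhds (EReal.coe_lt_coe_iff.1 hm))]
      with t ht htm
    rw [EReal.le_sub_iff_add_le (.inl (EReal.coe_ne_bot m)) (.inl (EReal.coe_ne_top m))]
    exact (add_le_add le_rfl (EReal.coe_le_coe_iff.2 htm.le)).trans (ht y)
  exact (add_le_add ha.le hbm.le).trans hmq

end Subdifferential

section ForwardBackward

variable {H α : Type*} [NormedAddCommGroup H] [InnerProductSpace ℝ H]
  {Φ : H → EReal} {B prox : H → H} {β μ : ℝ}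

theorem mul_norm_le_of_mul_sq_le_inner {a b : H} {c : ℝ}
    (h : c * ‖a‖ ^ 2 ≤ ⟪a, b⟫) : c * ‖a‖ ≤ ‖b‖ := by
  rcases (norm_nonneg a).eq_or_lt with ha | ha
  · rw [← ha, mul_zero]
    exact norm_nonneg b
  · have := h.trans (real_inner_le_norm a b)
    nlinarith

theorem lipschitzWith_of_cocoercive (hβ : 0 < β)
    (hcoco : ∀ x y : H, β * ‖B x - B y‖ ^ 2 ≤ ⟪B x - B y, x - y⟫) :
    LipschitzWith (Real.toNNReal β⁻¹) B := by
  refine LipschitzWith.of_dist_le_mul fun u v => ?_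
  rw [dist_eq_norm, dist_eq_norm, Real.coe_toNNReal _ (inv_nonneg.2 hβ.le), ← div_eq_inv_mul,
    le_div_iff₀' hβ]
  exact mul_norm_le_of_mul_sq_le_inner (hcoco u v)

theorem lipschitzWith_one_of_inSubdiff (hproper : (∀ x, Φ x ≠ ⊥) ∧ ∃ x, Φ x ≠ ⊤) (hμ0 : 0 < μ)
    (hprox : ∀ w : H, InSubdiff Φ (prox w) ((1 / μ) • (w - prox w))) : LipschitzWith 1 prox := by
  refine LipschitzWith.of_dist_le_mul fun u v => ?_
  have hmono := (hprox u).inner_sub_nonneg hproper (hprox v)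
  rw [← smul_sub, real_inner_smul_left] at hmono
  have hfirm : 1 * ‖prox u - prox v‖ ^ 2 ≤ ⟪prox u - prox v, u - v⟫ := by
    have := nonneg_of_mul_nonneg_right hmono (by positivity)
    rw [sub_sub_sub_comm, inner_sub_left, real_inner_self_eq_norm_sq, real_inner_comm] at this
    linarith
  simpa [dist_eq_norm] using mul_norm_le_of_mul_sq_le_inner hfirm

def fbMap (prox B : H → H) (μ : ℝ) (u : H) : H := prox (u - μ • B u)

theorem lipschitzWith_fbMap {Kp KB : NNReal} (hprox : LipschitzWith Kp prox)
    (hB : LipschitzWith KB B) : LipschitzWith (Kp * (1 + ‖μ‖₊ * KB)) (fbMap prox B μ) :=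
  hprox.comp (LipschitzWith.id.sub ((lipschitzWith_smul μ).comp hB))

theorem exists_pos_quadratic_margin (hμ0 : 0 < μ) (hμβ : μ < 4 * β) :
    ∃ ε > 0, ∀ d g : ℝ, μ * g * d ≤ (1 - ε) * d ^ 2 + (μ * β - ε) * g ^ 2 := by
  obtain ⟨c, hc, hβc⟩ : ∃ c > 0, μ * β = μ ^ 2 / 4 + c :=
    ⟨μ * β - μ ^ 2 / 4, by nlinarith [mul_pos hμ0 (sub_pos.2 hμβ)], by ring⟩
  obtain ⟨ε, hε, h₁, h₂⟩ : ∃ ε > 0, 2 * ε ≤ 1 ∧ ε * (μ ^ 2 / 2 + 1) ≤ c :=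
    ⟨min (1 / 2) (c / (μ ^ 2 / 2 + 1)), by positivity,
      by linarith [min_le_left (1 / 2) (c / (μ ^ 2 / 2 + 1))],
      (le_div_iff₀ (by positivity)).1 (min_le_right _ _)⟩
  refine ⟨ε, hε, fun d g => ?_⟩
  -- the form is `(d - μg/2)² + c g² - ε (d² + g²)`, and `d² ≤ 2 (d - μg/2)² + μ²g²/2`
  have hd : d ^ 2 ≤ 2 * (d - μ * g / 2) ^ 2 + μ ^ 2 / 2 * g ^ 2 := by
    nlinarith [sq_nonneg (d - μ * g)]
  rw [hβc]
  nlinarith [mul_le_mul_of_nonneg_left hd hε.le,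
    mul_le_mul_of_nonneg_right h₁ (sq_nonneg (d - μ * g / 2)),
    mul_le_mul_of_nonneg_right h₂ (sq_nonneg g)]

theorem inner_fbMap_sub_le (hproper : (∀ x, Φ x ≠ ⊥) ∧ ∃ x, Φ x ≠ ⊤)
    (hcoco : ∀ x y : H, β * ‖B x - B y‖ ^ 2 ≤ ⟪B x - B y, x - y⟫) (hμ0 : 0 < μ)
    (hprox : ∀ w : H, InSubdiff Φ (prox w) ((1 / μ) • (w - prox w)))
    {z : H} (hz : InSubdiff Φ z (-B z)) (u : H) :
    ⟪fbMap prox B μ u - u, u - z⟫ ≤ μ * ‖B u - B z‖ * ‖fbMap prox B μ u - u‖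
      - ‖fbMap prox B μ u - u‖ ^ 2 - μ * β * ‖B u - B z‖ ^ 2 := by
  have hmono := (hprox (u - μ • B u)).inner_sub_nonneg hproper hz
  set d := fbMap prox B μ u - u
  set g := B u - B z
  have hv : (1 / μ) • (u - μ • B u - prox (u - μ • B u)) - -B z = (-(1 / μ)) • d - g := by
    simp only [d, g, fbMap]
    match_scalars <;> field_simp
  have hP : prox (u - μ • B u) - z = (u - z) + d := by
    simp only [d, fbMap]
    abel
  rw [hv, hP, inner_sub_left, inner_add_right, inner_add_right, real_inner_smul_left,
    real_inner_smul_left, real_inner_self_eq_norm_sq] at hmono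
  have hscaled : ⟪d, u - z⟫ + ‖d‖ ^ 2 + μ * ⟪g, u - z⟫ + μ * ⟪g, d⟫ ≤ 0 := by
    have := mul_nonneg hμ0.le hmono
    field_simp at this
    linarith
  have hcoco' : β * ‖g‖ ^ 2 ≤ ⟪g, u - z⟫ := hcoco u z
  have hgd : -⟪g, d⟫ ≤ ‖g‖ * ‖d‖ := by
    linarith [neg_abs_le ⟪g, d⟫, abs_real_inner_le_norm g d]
  nlinarith [mul_le_mul_of_nonneg_left hcoco' hμ0.le, mul_le_mul_of_nonneg_left hgd hμ0.le]

theorem exists_pos_inner_fbMap_sub_le (hproper : (∀ x, Φ x ≠ ⊥) ∧ ∃ x, Φ x ≠ ⊤)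
    (hcoco : ∀ x y : H, β * ‖B x - B y‖ ^ 2 ≤ ⟪B x - B y, x - y⟫) (hμ0 : 0 < μ)
    (hμβ : μ < 4 * β) (hprox : ∀ w : H, InSubdiff Φ (prox w) ((1 / μ) • (w - prox w))) :
    ∃ ε > 0, ∀ z, InSubdiff Φ z (-B z) → ∀ u, ⟪fbMap prox B μ u - u, u - z⟫ ≤
      -ε * (‖fbMap prox B μ u - u‖ ^ 2 + ‖B u - B z‖ ^ 2) := by
  obtain ⟨ε, hε, hmargin⟩ := exists_pos_quadratic_margin hμ0 hμβ
  refine ⟨ε, hε, fun z hz u => ?_⟩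
  have := hmargin ‖fbMap prox B μ u - u‖ ‖B u - B z‖
  linarith [inner_fbMap_sub_le hproper hcoco hμ0 hprox hz u]

theorem eq_of_cocoercive_of_weakTendsto {L : Filter α} [L.NeBot] (hβ : 0 < β)
    (hcoco : ∀ x y : H, β * ‖B x - B y‖ ^ 2 ≤ ⟪B x - B y, x - y⟫) {p : α → H} {q b : H} {C : ℝ}
    (hp : WeakTendsto p L q) (hbdd : ∀ᶠ t in L, ‖p t‖ ≤ C)
    (hB : Tendsto (fun t => B (p t)) L (𝓝 b)) : B q = b := by
  have hv : Tendsto (fun t => B q - B (p t)) L (𝓝 (B q - b)) := tendsto_const_nhds.sub hB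
  have hinner : Tendsto (fun t => ⟪B q - B (p t), q - p t⟫) L (𝓝 0) := by
    simpa [inner_sub_right] using
      (hv.inner (tendsto_const_nhds (x := q))).sub (hp.tendsto_inner hbdd hv)
  have hle : β * ‖B q - b‖ ^ 2 ≤ 0 :=
    le_of_tendsto_of_tendsto ((hv.norm.pow 2).const_mul β) hinner
      (Eventually.of_forall fun t => hcoco q (p t))
  have hsq : ‖B q - b‖ ^ 2 = 0 := le_antisymm (nonpos_of_mul_nonpos_right hle hβ) (sq_nonneg _)
  rwa [sq_eq_zero_iff, norm_eq_zero, sub_eq_zero] at hsq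

theorem inSubdiff_of_weakTendsto_of_fbMap_sub_tendsto_zero [CompleteSpace H] {L : Filter α}
    [L.NeBot] (hconvex : ∀ x y : H, ∀ a b : ℝ, 0 ≤ a → 0 ≤ b → a + b = 1 →
      Φ (a • x + b • y) ≤ (a : EReal) * Φ x + (b : EReal) * Φ y)
    (hlsc : LowerSemicontinuous Φ) (hβ : 0 < β)
    (hcoco : ∀ x y : H, β * ‖B x - B y‖ ^ 2 ≤ ⟪B x - B y, x - y⟫) (hμ : μ ≠ 0)
    (hprox : ∀ w : H, InSubdiff Φ (prox w) ((1 / μ) • (w - prox w)))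
    {u : α → H} {q b : H} {C : ℝ} (hu : WeakTendsto u L q) (hbdd : ∀ᶠ t in L, ‖u t‖ ≤ C)
    (hres : Tendsto (fun t => fbMap prox B μ (u t) - u t) L (𝓝 0))
    (hB : Tendsto (fun t => B (u t)) L (𝓝 b)) : InSubdiff Φ q (-B q) := by
  rw [eq_of_cocoercive_of_weakTendsto hβ hcoco hu hbdd hB]
  have hp : WeakTendsto (fun t => fbMap prox B μ (u t)) L q := by
    simpa using hu.add hres.weakTendsto
  have hpbdd : ∀ᶠ t in L, ‖fbMap prox B μ (u t)‖ ≤ C + 1 := by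
    filter_upwards [hbdd, hres.norm.eventually (eventually_le_nhds (by simp : ‖(0 : H)‖ < 1))]
      with t hu hr
    calc ‖fbMap prox B μ (u t)‖ ≤ ‖u t‖ + ‖fbMap prox B μ (u t) - u t‖ := norm_le_insert' _ _
      _ ≤ C + 1 := add_le_add hu hr
  have hv : Tendsto (fun t => (1 / μ) • (u t - μ • B (u t) - fbMap prox B μ (u t))) L (𝓝 (-b)) := by
    refine (by simpa using hB.neg.sub (hres.const_smul (1 / μ)) :
      Tendsto (fun t => -B (u t) - (1 / μ) • (fbMap prox B μ (u t) - u t)) L (𝓝 (-b))).congr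
      fun t => ?_
    match_scalars <;> field_simp
  exact InSubdiff.of_weakTendsto hconvex hlsc hp hpbdd hv (Eventually.of_forall fun t => hprox _)

end ForwardBackward

section RealAnalysis

theorem integrableOn_Ioi_of_le_neg_deriv {h h' ψ : ℝ → ℝ} {a : ℝ}
    (hderiv : ∀ t, a ≤ t → HasDerivAt h (h' t) t) (hh : ∀ t, a ≤ t → 0 ≤ h t)
    (hψc : ContinuousOn ψ (Ici a)) (hψ0 : ∀ t, a ≤ t → 0 ≤ ψ t)
    (hψ : ∀ t, a ≤ t → ψ t ≤ -h' t) : IntegrableOn ψ (Ioi a) := by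
  have hIcc : ∀ T, IntegrableOn ψ (Icc a T) := fun T =>
    (hψc.mono Icc_subset_Ici_self).integrableOn_Icc
  refine integrableOn_Ioi_of_intervalIntegral_norm_bounded (h a) a
    (fun T => (hIcc T).mono_set Ioc_subset_Icc_self) tendsto_id ?_
  filter_upwards [eventually_ge_atTop a] with T hT
  have hnorm : ∫ t in a..T, ‖ψ t‖ = ∫ t in a..T, ψ t :=
    intervalIntegral.integral_congr fun t ht => by
      rw [uIcc_of_le hT] at ht
      exact Real.norm_of_nonneg (hψ0 t ht.1)
  have hftc : ∫ t in a..T, ψ t ≤ -h T - -h a :=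
    intervalIntegral.integral_le_sub_of_hasDeriv_right_of_le hT
      (fun t ht => (hderiv t ht.1).continuousAt.neg.continuousWithinAt)
      (fun t ht => (hderiv t ht.1.le).neg.hasDerivWithinAt) (hIcc T)
      (fun t ht => hψ t ht.1.le)
  show ∫ t in a..T, ‖ψ t‖ ≤ h a
  linarith [hh T hT]

theorem tendsto_zero_of_lipschitzOnWith_of_integrableOn_sq {E : Type*} [NormedAddCommGroup E]
    {F : ℝ → E} {K : NNReal} {a : ℝ} (hF : LipschitzOnWith K F (Ici a))
    (hint : IntegrableOn (fun t => ‖F t‖ ^ 2) (Ioi a)) : Tendsto F atTop (𝓝 0) := by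
  rw [tendsto_zero_iff_norm_tendsto_zero]
  refine tendsto_order.2 ⟨fun b hb => Eventually.of_forall fun t => hb.trans_le (norm_nonneg _),
    fun ε hε => ?_⟩
  set δ := ε / (2 * (K + 1))
  have hδ : 0 < δ := by positivity
  have hKδ : K * δ ≤ ε / 2 := by
    have : (K + 1) * δ = ε / 2 := by simp only [δ]; field_simp
    nlinarith
  have hii : ∀ S T, a ≤ S → S ≤ T → IntervalIntegrable (fun t => ‖F t‖ ^ 2) volume S T :=
    fun S T hS hST => (intervalIntegrable_iff_integrableOn_Ioc_of_le hST).2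
      (hint.mono_set fun s hs => hS.trans_lt hs.1)
  have htail : Tendsto (fun t => ∫ s in t..t + δ, ‖F s‖ ^ 2) atTop (𝓝 0) := by
    have hI := intervalIntegral_tendsto_integral_Ioi a hint tendsto_id
    refine (by simpa using (hI.comp (tendsto_atTop_add_const_right _ δ tendsto_id)).sub hI :
      Tendsto (fun t => (∫ s in a..t + δ, ‖F s‖ ^ 2) - ∫ s in a..t, ‖F s‖ ^ 2) atTop (𝓝 0)).congr'
      ?_
    filter_upwards [eventually_ge_atTop a] with t ht
    exact intervalIntegral.integral_interval_sub_left (hii _ _ le_rfl (by linarith))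
      (hii _ _ le_rfl ht)
  filter_upwards [htail.eventually (gt_mem_nhds (show 0 < δ * (ε / 2) ^ 2 by positivity)),
    eventually_ge_atTop a] with t ht hta
  by_contra! hge
  have hlow : ∀ s ∈ Icc t (t + δ), (ε / 2) ^ 2 ≤ ‖F s‖ ^ 2 := fun s hs => by
    have hlip := hF.norm_sub_le (mem_Ici.2 (hta.trans hs.1)) (mem_Ici.2 hta)
    rw [Real.norm_of_nonneg (by linarith [hs.1])] at hlip
    have : K * (s - t) ≤ K * δ := mul_le_mul_of_nonneg_left (by linarith [hs.2]) K.2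
    have := norm_sub_norm_le (F t) (F s)
    rw [norm_sub_rev] at this
    nlinarith [norm_nonneg (F s)]
  have hmass : δ * (ε / 2) ^ 2 ≤ ∫ s in t..t + δ, ‖F s‖ ^ 2 := by
    calc δ * (ε / 2) ^ 2 = ∫ _ in t..t + δ, (ε / 2) ^ 2 := by simp
      _ ≤ _ := intervalIntegral.integral_mono_on (by linarith) intervalIntegrable_const
          (hii _ _ hta (by linarith)) hlow
  linarith

end RealAnalysis

section FejerFlow

variable {H : Type*} [NormedAddCommGroup H] [InnerProductSpace ℝ H] {R G : H → H}
  {x x' : ℝ → H} {z : H} {ε : ℝ}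

theorem inner_nonpos_of_fejer (hε : 0 ≤ ε)
    (hR : ∀ u, ⟪R u, u - z⟫ ≤ -ε * (‖R u‖ ^ 2 + ‖G u‖ ^ 2)) (u : H) : ⟪R u, u - z⟫ ≤ 0 :=
  (hR u).trans (by rw [neg_mul]; exact neg_nonpos.2 (by positivity))

theorem mul_norm_le_of_fejer (hε : 0 ≤ ε) (hR : ∀ u, ⟪R u, u - z⟫ ≤ -ε * (‖R u‖ ^ 2 + ‖G u‖ ^ 2))
    (u : H) : ε * ‖R u‖ ≤ ‖u - z‖ := by
  rw [← norm_neg (u - z), neg_sub]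
  refine mul_norm_le_of_mul_sq_le_inner ?_
  rw [← neg_sub u z, inner_neg_right]
  nlinarith [hR u, mul_nonneg hε (sq_nonneg ‖G u‖)]

theorem antitoneOn_norm_sub_sq (hderiv : ∀ t, HasDerivAt x (x' t) t)
    (hx' : ∀ t, 0 ≤ t → x' t = R (x t)) (hR : ∀ u, ⟪R u, u - z⟫ ≤ 0) :
    AntitoneOn (fun t => ‖x t - z‖ ^ 2) (Ici 0) := by
  have hd : ∀ t, HasDerivAt (fun s => ‖x s - z‖ ^ 2) (2 * ⟪x t - z, x' t⟫) t := fun t =>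
    ((hderiv t).sub_const z).norm_sq
  refine antitoneOn_of_hasDerivWithinAt_nonpos (convex_Ici 0)
    (fun t _ => (hd t).continuousAt.continuousWithinAt) (fun t _ => (hd t).hasDerivWithinAt)
    fun t ht => ?_
  rw [interior_Ici] at ht
  rw [real_inner_comm, hx' t (le_of_lt ht)]
  linarith [hR (x t)]

theorem norm_sub_le_norm_sub_at_zero (hderiv : ∀ t, HasDerivAt x (x' t) t)
    (hx' : ∀ t, 0 ≤ t → x' t = R (x t)) (hR : ∀ u, ⟪R u, u - z⟫ ≤ 0) {t : ℝ} (ht : 0 ≤ t) :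
    ‖x t - z‖ ≤ ‖x 0 - z‖ :=
  (pow_le_pow_iff_left₀ (norm_nonneg _) (norm_nonneg _) two_ne_zero).1 <|
    antitoneOn_norm_sub_sq hderiv hx' hR self_mem_Ici ht ht

theorem exists_tendsto_norm_sub_sq (hderiv : ∀ t, HasDerivAt x (x' t) t)
    (hx' : ∀ t, 0 ≤ t → x' t = R (x t)) (hR : ∀ u, ⟪R u, u - z⟫ ≤ 0) :
    ∃ c, Tendsto (fun t => ‖x t - z‖ ^ 2) atTop (𝓝 c) := by
  set f : ℝ → ℝ := fun t => ‖x (max t 0) - z‖ ^ 2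
  have hf : Antitone f := fun s t hst =>
    antitoneOn_norm_sub_sq hderiv hx' hR (le_max_right s 0) (le_max_right t 0)
      (max_le_max hst le_rfl)
  refine ⟨⨅ t, f t, (tendsto_atTop_ciInf hf ⟨0, ?_⟩).congr' ?_⟩
  · rintro _ ⟨t, rfl⟩
    positivity
  · filter_upwards [eventually_ge_atTop 0] with t ht
    simp only [f, max_eq_left ht]

theorem lipschitzOnWith_of_fejer (hderiv : ∀ t, HasDerivAt x (x' t) t)
    (hx' : ∀ t, 0 ≤ t → x' t = R (x t)) (hε : 0 < ε)
    (hR : ∀ u, ⟪R u, u - z⟫ ≤ -ε * (‖R u‖ ^ 2 + ‖G u‖ ^ 2)) :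
    LipschitzOnWith (Real.toNNReal (‖x 0 - z‖ / ε)) x (Ici 0) := by
  refine (convex_Ici 0).lipschitzOnWith_of_nnnorm_hasDerivWithin_le
    (fun t _ => (hderiv t).hasDerivWithinAt) fun t ht => ?_
  rw [← NNReal.coe_le_coe, coe_nnnorm, Real.coe_toNNReal _ (by positivity), le_div_iff₀' hε,
    hx' t ht]
  exact (mul_norm_le_of_fejer hε.le hR (x t)).trans
    (norm_sub_le_norm_sub_at_zero hderiv hx' (inner_nonpos_of_fejer hε.le hR) ht)

theorem integrableOn_sq_of_fejer (hderiv : ∀ t, HasDerivAt x (x' t) t)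
    (hx' : ∀ t, 0 ≤ t → x' t = R (x t)) (hε : 0 < ε) (hRc : Continuous R) (hGc : Continuous G)
    (hR : ∀ u, ⟪R u, u - z⟫ ≤ -ε * (‖R u‖ ^ 2 + ‖G u‖ ^ 2)) :
    IntegrableOn (fun t => ‖R (x t)‖ ^ 2) (Ioi 0) ∧
      IntegrableOn (fun t => ‖G (x t)‖ ^ 2) (Ioi 0) := by
  have hxc : Continuous x := continuous_iff_continuousAt.2 fun t => (hderiv t).continuousAt
  have hsum : IntegrableOn (fun t => ‖R (x t)‖ ^ 2 + ‖G (x t)‖ ^ 2) (Ioi 0) := by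
    refine integrableOn_Ioi_of_le_neg_deriv (h := fun t => ‖x t - z‖ ^ 2 / (2 * ε))
      (fun t _ => (((hderiv t).sub_const z).norm_sq).div_const (2 * ε)) (fun t _ => by positivity)
      (by fun_prop) (fun t _ => by positivity) fun t ht => ?_
    rw [← neg_div, le_div_iff₀ (by positivity), real_inner_comm, hx' t ht]
    nlinarith [hR (x t)]
  have hmeas : ∀ f : H → H, Continuous f →
      AEStronglyMeasurable (fun t => ‖f (x t)‖ ^ 2) (volume.restrict (Ioi 0)) := fun f hf =>
    ((hf.comp hxc).norm.pow 2).aestronglyMeasurable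
  constructor
  · refine hsum.mono' (hmeas R hRc) (Eventually.of_forall fun t => ?_)
    simp only [norm_pow, norm_norm]
    linarith [sq_nonneg ‖G (x t)‖]
  · refine hsum.mono' (hmeas G hGc) (Eventually.of_forall fun t => ?_)
    simp only [norm_pow, norm_norm]
    linarith [sq_nonneg ‖R (x t)‖]

end FejerFlow

/-- Convergence of the proximal-gradient dynamic
`ẋ + x - prox_{μΦ}(x - μ B x) = 0` for `0 < μ < 4β`: weak convergence of the
orbit to a zero of `∂Φ + B`, strong convergence of `B(x(t))`, `ẋ(t) → 0`, and
finite energy. -/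
theorem proximal_gradient_dynamic_convergence
    {H : Type*} [NormedAddCommGroup H] [InnerProductSpace ℝ H] [CompleteSpace H]
    (Φ : H → EReal)
    (hproper : (∀ x, Φ x ≠ ⊥) ∧ ∃ x, Φ x ≠ ⊤)
    (hconvex : ∀ x y : H, ∀ a b : ℝ, 0 ≤ a → 0 ≤ b → a + b = 1 →
      Φ (a • x + b • y) ≤ (a : EReal) * Φ x + (b : EReal) * Φ y)
    (hlsc : LowerSemicontinuous Φ)
    (β : ℝ) (hβ : 0 < β) (B : H → H)
    (hcoco : ∀ x y : H, β * ‖B x - B y‖ ^ 2 ≤ ⟪B x - B y, x - y⟫)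
    (μ : ℝ) (hμ0 : 0 < μ) (hμβ : μ < 4 * β)
    (prox : H → H)
    (hprox : ∀ w : H, InSubdiff Φ (prox w) ((1 / μ) • (w - prox w)))
    (hS : ∃ z : H, InSubdiff Φ z (-B z))
    (x x' : ℝ → H)
    (hderiv : ∀ t : ℝ, HasDerivAt x (x' t) t)
    (heq : ∀ t : ℝ, 0 ≤ t → x' t + x t - prox (x t - μ • B (x t)) = 0) :
    ∃ xinf : H, InSubdiff Φ xinf (-B xinf) ∧
      (∀ w : H, Tendsto (fun t => ⟪x t, w⟫) atTop (nhds ⟪xinf, w⟫)) ∧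
      Tendsto (fun t => B (x t)) atTop (nhds (B xinf)) ∧
      Tendsto x' atTop (nhds 0) ∧
      IntegrableOn (fun t => ‖x' t‖ ^ 2) (Ioi (0 : ℝ)) := by
  obtain ⟨z, hz⟩ := hS
  set R : H → H := fun u => fbMap prox B μ u - u
  have hx' : ∀ t, 0 ≤ t → x' t = R (x t) := fun t ht => eq_sub_of_add_eq (sub_eq_zero.1 (heq t ht))
  obtain ⟨ε, hε, hfejer⟩ := exists_pos_inner_fbMap_sub_le hproper hcoco hμ0 hμβ hprox
  have hBlip := lipschitzWith_of_cocoercive hβ hcoco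
  have hRlip := (lipschitzWith_fbMap (μ := μ)
    (lipschitzWith_one_of_inSubdiff hproper hμ0 hprox) hBlip).sub LipschitzWith.id
  have hGlip := hBlip.sub (LipschitzWith.const (B z))
  obtain ⟨hRint, hGint⟩ := integrableOn_sq_of_fejer hderiv hx' hε hRlip.continuous
    hGlip.continuous (hfejer z hz)
  have hxlip := lipschitzOnWith_of_fejer hderiv hx' hε (hfejer z hz)
  have hRx : Tendsto (fun t => R (x t)) atTop (𝓝 0) :=
    tendsto_zero_of_lipschitzOnWith_of_integrableOn_sq (hRlip.comp_lipschitzOnWith hxlip) hRint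
  have hBx : Tendsto (fun t => B (x t)) atTop (𝓝 (B z)) := tendsto_sub_nhds_zero_iff.1 <|
    tendsto_zero_of_lipschitzOnWith_of_integrableOn_sq (hGlip.comp_lipschitzOnWith hxlip) hGint
  have hbdd : ∀ᶠ t in atTop, ‖x t‖ ≤ ‖z‖ + ‖x 0 - z‖ := by
    filter_upwards [eventually_ge_atTop 0] with t ht
    exact (norm_le_insert' _ z).trans (add_le_add le_rfl
      (norm_sub_le_norm_sub_at_zero hderiv hx' (inner_nonpos_of_fejer hε.le (hfejer z hz)) ht))
  obtain ⟨xinf, hxinf, hweak⟩ := exists_weakTendsto_of_opial (S := {q | InSubdiff Φ q (-B q)})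
    hbdd (fun z' hz' => exists_tendsto_norm_sub_sq hderiv hx'
      (inner_nonpos_of_fejer hε.le (hfejer z' hz')))
    fun G q hG hq => inSubdiff_of_weakTendsto_of_fbMap_sub_tendsto_zero hconvex hlsc hβ hcoco
      hμ0.ne' hprox hq (hbdd.filter_mono hG) (hRx.mono_left hG) (hBx.mono_left hG)
  refine ⟨xinf, hxinf, hweak, ?_, ?_, ?_⟩
  · rwa [eq_of_cocoercive_of_weakTendsto hβ hcoco hweak hbdd hBx]
  · exact hRx.congr' ((eventually_ge_atTop 0).mono fun t ht => (hx' t ht).symm)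
  · exact hRint.congr_fun (fun t ht => by rw [hx' t (le_of_lt ht)]) measurableSet_Ioi
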